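/- arXiv:2210.12269 — 3 statements merged into one kernel-verified Lean document; each statement's English description precedes it below -/
import Mathlib

section
/- For every natural number n ≥ 1, the puzzle (M, C, B, d) = (n, n, 3, 0) (n missionaries, n cannibals, boat capacity 3, safety margin 0) is solvable if and only if n ≤ 5. -/
/-- A state: (missionaries at first bank, cannibals at first bank, boat at first bank). -/
abbrev MCState := ℕ × ℕ × Bool

/-- A state is legal for parameters M, C, d. -/
def MCLegal (M C d : ℕ) (s : MCState) : Prop :=
  s.1 ≤ M ∧ s.2.1 ≤ C ∧
  (0 < s.1 ∧ 0 < s.2.1 → s.1 ≥ s.2.1 + d) ∧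
  (0 < M - s.1 ∧ 0 < C - s.2.1 → M - s.1 ≥ (C - s.2.1) + d)

/-- A legal boat load of e1 missionaries and e2 cannibals. -/
def MCLoad (B d e1 e2 : ℕ) : Prop :=
  1 ≤ e1 + e2 ∧ e1 + e2 ≤ B ∧ (0 < e1 ∧ 0 < e2 → e1 ≥ e2 + d)

/-- A move from state `s` to state `t` carrying e1 missionaries and e2 cannibals. -/
def MCMoveLoad (M C B d e1 e2 : ℕ) (s t : MCState) : Prop :=
  MCLegal M C d s ∧ MCLegal M C d t ∧ MCLoad B d e1 e2 ∧
  ((s.2.2 = true ∧ e1 ≤ s.1 ∧ e2 ≤ s.2.1 ∧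
      t = (s.1 - e1, s.2.1 - e2, false)) ∨
   (s.2.2 = false ∧ s.1 + e1 ≤ M ∧ s.2.1 + e2 ≤ C ∧
      t = (s.1 + e1, s.2.1 + e2, true)))

/-- A move from state `s` to state `t` with some legal load. -/
def MCMove (M C B d : ℕ) (s t : MCState) : Prop :=
  ∃ e1 e2, MCMoveLoad M C B d e1 e2 s t

/-- `s` is a solution of length `k` of the puzzle (M, C, B, d). -/
def MCSolution (M C B d k : ℕ) (s : Fin (k + 1) → MCState) : Prop :=
  s 0 = (M, C, true) ∧ s (Fin.last k) = (0, 0, false) ∧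
  ∀ i : Fin k, MCMove M C B d (s i.castSucc) (s i.succ)

/-- The puzzle (M, C, B, d) is solvable. -/
def MCSolvable (M C B d : ℕ) : Prop :=
  ∃ k, ∃ s : Fin (k + 1) → MCState, MCSolution M C B d k s

/-- The minimal length of a solution of the puzzle (M, C, B, d). -/
noncomputable def MCMinLength (M C B d : ℕ) : ℕ :=
  sInf {k | ∃ s : Fin (k + 1) → MCState, MCSolution M C B d k s}

/-- The number of solutions of minimal length of the puzzle (M, C, B, d). -/
noncomputable def MCNumMinSolutions (M C B d : ℕ) : ℕ :=
  Nat.card {s : Fin (MCMinLength M C B d + 1) → MCState //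
    MCSolution M C B d (MCMinLength M C B d) s}



noncomputable instance (M C d : ℕ) (s : MCState) : Decidable (MCLegal M C d s) :=
  inferInstanceAs (Decidable (_ ∧ _ ∧ _ ∧ _))

noncomputable instance (B d e1 e2 : ℕ) : Decidable (MCLoad B d e1 e2) :=
  inferInstanceAs (Decidable (_ ∧ _ ∧ _))

noncomputable instance (M C B d e1 e2 : ℕ) (s t : MCState) : Decidable (MCMoveLoad M C B d e1 e2 s t) :=
  inferInstanceAs (Decidable (_ ∧ _ ∧ _ ∧ (_ ∨ _)))

/-- Invariant for the unsolvability of (n,n,3,0) with n ≥ 6. -/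
def MCInv (n : ℕ) (s : MCState) : Prop :=
  s.1 = n ∨ (s.1 = s.2.1 ∧ n ≤ s.1 + 3 ∧ (s.2.2 = true → n ≤ s.1 + 2))

lemma mc_inv_step {n : ℕ} (hn : 6 ≤ n) {s t : MCState}
    (h : MCMove n n 3 0 s t) (hs : MCInv n s) : MCInv n t := by
  obtain ⟨e1, e2, hls, hlt, hload, hcase⟩ := h
  obtain ⟨m, c, b⟩ := s
  obtain ⟨m', c', b'⟩ := t
  simp only [MCLegal, MCLoad, MCInv] at *
  rcases hcase with ⟨hb, h1, h2, ht⟩ | ⟨hb, h1, h2, ht⟩ <;>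
    simp only [Prod.mk.injEq] at ht <;>
    obtain ⟨hm, hc, hb'⟩ := ht <;>
    subst hm hc hb' hb <;>
    simp only [Bool.false_eq_true, false_implies, and_true, true_implies] at * <;>
    omega

lemma mc_unsolvable_of_six {n : ℕ} (hn : 6 ≤ n) : ¬ MCSolvable n n 3 0 := by
  rintro ⟨k, s, h0, hlast, hmove⟩
  have key : ∀ j : ℕ, ∀ h : j < k + 1, MCInv n (s ⟨j, h⟩) := by
    intro j
    induction j with
    | zero =>
      intro h
      have : (⟨0, h⟩ : Fin (k + 1)) = 0 := rfl
      rw [this, h0]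
      left; rfl
    | succ j ih =>
      intro h
      have hj : j < k := by omega
      have hm := hmove ⟨j, hj⟩
      have h1 : (⟨j, hj⟩ : Fin k).castSucc = ⟨j, by omega⟩ := rfl
      have h2 : (⟨j, hj⟩ : Fin k).succ = ⟨j + 1, h⟩ := rfl
      rw [h1, h2] at hm
      exact mc_inv_step hn hm (ih (by omega))
  have hlast' : (⟨k, by omega⟩ : Fin (k + 1)) = Fin.last k := rfl
  have := key k (by omega)
  rw [hlast', hlast] at this
  simp only [MCInv] at this
  omega

lemma mc_solv_1 : MCSolvable 1 1 3 0 := by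
  refine ⟨1, ![(1, 1, true), (0, 0, false)], rfl, rfl, ?_⟩
  intro i
  fin_cases i
  · exact ⟨1, 1, by decide⟩

lemma mc_solv_2 : MCSolvable 2 2 3 0 := by
  refine ⟨3, ![(2, 2, true), (2, 0, false), (2, 1, true), (0, 0, false)], rfl, rfl, ?_⟩
  intro i
  fin_cases i
  · exact ⟨0, 2, by decide⟩
  · exact ⟨0, 1, by decide⟩
  · exact ⟨2, 1, by decide⟩

lemma mc_solv_3 : MCSolvable 3 3 3 0 := by
  refine ⟨5, ![(3, 3, true), (3, 1, false), (3, 2, true), (0, 2, false), (0, 3, true), (0, 0, false)], rfl, rfl, ?_⟩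
  intro i
  fin_cases i
  · exact ⟨0, 2, by decide⟩
  · exact ⟨0, 1, by decide⟩
  · exact ⟨3, 0, by decide⟩
  · exact ⟨0, 1, by decide⟩
  · exact ⟨0, 3, by decide⟩

lemma mc_solv_4 : MCSolvable 4 4 3 0 := by
  refine ⟨9, ![(4, 4, true), (4, 2, false), (4, 3, true), (4, 0, false), (4, 1, true), (1, 1, false), (2, 2, true), (0, 2, false), (0, 3, true), (0, 0, false)], rfl, rfl, ?_⟩
  intro i
  fin_cases i
  · exact ⟨0, 2, by decide⟩
  · exact ⟨0, 1, by decide⟩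
  · exact ⟨0, 3, by decide⟩
  · exact ⟨0, 1, by decide⟩
  · exact ⟨3, 0, by decide⟩
  · exact ⟨1, 1, by decide⟩
  · exact ⟨2, 0, by decide⟩
  · exact ⟨0, 1, by decide⟩
  · exact ⟨0, 3, by decide⟩

lemma mc_solv_5 : MCSolvable 5 5 3 0 := by
  refine ⟨11, ![(5, 5, true), (5, 3, false), (5, 4, true), (5, 1, false), (5, 2, true), (2, 2, false), (3, 3, true), (0, 3, false), (0, 4, true), (0, 2, false), (0, 3, true), (0, 0, false)], rfl, rfl, ?_⟩
  intro i
  fin_cases i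
  · exact ⟨0, 2, by decide⟩
  · exact ⟨0, 1, by decide⟩
  · exact ⟨0, 3, by decide⟩
  · exact ⟨0, 1, by decide⟩
  · exact ⟨3, 0, by decide⟩
  · exact ⟨1, 1, by decide⟩
  · exact ⟨3, 0, by decide⟩
  · exact ⟨0, 1, by decide⟩
  · exact ⟨0, 2, by decide⟩
  · exact ⟨0, 1, by decide⟩
  · exact ⟨0, 3, by decide⟩


/-- For n ≥ 1, the puzzle (n,n,3,0) is solvable iff n ≤ 5. -/
theorem stmt4 (n : ℕ) (hn : 1 ≤ n) : MCSolvable n n 3 0 ↔ n ≤ 5 := by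
  constructor
  · intro hs
    by_contra h5
    exact mc_unsolvable_of_six (by omega) hs
  · intro h5
    interval_cases n
    · exact mc_solv_1
    · exact mc_solv_2
    · exact mc_solv_3
    · exact mc_solv_4
    · exact mc_solv_5
end

section
/- For every natural number n ≥ 7, the minimal length of a solution of the puzzle (M, C, B, d) = (n, n, 4, 0) is exactly 2n − 3. -/
/-- Potential: lower bound on remaining moves, boat at first bank. -/
def mcPhiT (n m c : ℕ) : ℕ :=
  if m = 0 then (if c = 0 then 0 else 2 * ((c - 4 + 2) / 3) + 1)
  else if m = c then (if c ≤ 2 then 1 else 2 * c - 3)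
  else if n - 3 ≤ c then 2 * n - 5
  else 2 * n - 7 + 2 * ((n - 4 - c + 2) / 3)

/-- Potential: lower bound on remaining moves, boat at second bank. -/
def mcPhiF (n m c : ℕ) : ℕ :=
  if m = 0 then 2 * ((c + 2) / 3)
  else if m = c then (if c ≤ n - 2 then 2 * c else 2 * n - 4)
  else if n - 4 ≤ c then 2 * n - 4
  else 2 * n - 6 + 2 * ((n - 8 - c + 2) / 3)

def mcPhi (n : ℕ) (s : MCState) : ℕ :=
  if s.2.2 then mcPhiT n s.1 s.2.1 else mcPhiF n s.1 s.2.1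

set_option maxHeartbeats 1000000 in
lemma mcPhi_fwd (n : ℕ) (hn : 7 ≤ n) (m c e1 e2 : ℕ)
    (hm : m ≤ n) (hc : c ≤ n)
    (hs1 : 0 < m ∧ 0 < c → m ≥ c + 0)
    (hs2 : 0 < n - m ∧ 0 < n - c → n - m ≥ (n - c) + 0)
    (ht1 : 0 < m - e1 ∧ 0 < c - e2 → m - e1 ≥ (c - e2) + 0)
    (ht2 : 0 < n - (m - e1) ∧ 0 < n - (c - e2) → n - (m - e1) ≥ (n - (c - e2)) + 0)
    (hl1 : 1 ≤ e1 + e2) (hl2 : e1 + e2 ≤ 4) (hl3 : 0 < e1 ∧ 0 < e2 → e1 ≥ e2 + 0)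
    (he1 : e1 ≤ m) (he2 : e2 ≤ c) :
    mcPhiT n m c ≤ mcPhiF n (m - e1) (c - e2) + 1 := by
  unfold mcPhiT mcPhiF
  split_ifs <;> omega

set_option maxHeartbeats 1000000 in
lemma mcPhi_bwd (n : ℕ) (hn : 7 ≤ n) (m c e1 e2 : ℕ)
    (hm : m ≤ n) (hc : c ≤ n)
    (hs1 : 0 < m ∧ 0 < c → m ≥ c + 0)
    (hs2 : 0 < n - m ∧ 0 < n - c → n - m ≥ (n - c) + 0)
    (ht1 : 0 < m + e1 ∧ 0 < c + e2 → m + e1 ≥ (c + e2) + 0)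
    (ht2 : 0 < n - (m + e1) ∧ 0 < n - (c + e2) → n - (m + e1) ≥ (n - (c + e2)) + 0)
    (hl1 : 1 ≤ e1 + e2) (hl2 : e1 + e2 ≤ 4) (hl3 : 0 < e1 ∧ 0 < e2 → e1 ≥ e2 + 0)
    (he1 : m + e1 ≤ n) (he2 : c + e2 ≤ n) :
    mcPhiF n m c ≤ mcPhiT n (m + e1) (c + e2) + 1 := by
  unfold mcPhiT mcPhiF
  split_ifs <;> omega

lemma mcPhi_move (n : ℕ) (hn : 7 ≤ n) {s t : MCState} (h : MCMove n n 4 0 s t) :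
    mcPhi n s ≤ mcPhi n t + 1 := by
  obtain ⟨e1, e2, hsl, htl, hld, hdir⟩ := h
  obtain ⟨m, c, b⟩ := s
  obtain ⟨hm, hc, hs1, hs2⟩ := hsl
  obtain ⟨hl1, hl2, hl3⟩ := hld
  rcases hdir with ⟨hb, he1, he2, ht⟩ | ⟨hb, he1, he2, ht⟩
  · subst ht
    cases b
    · exact absurd hb (by simp)
    · obtain ⟨tm, tc, ht1, ht2⟩ := htl
      show mcPhiT n m c ≤ mcPhiF n (m - e1) (c - e2) + 1
      exact mcPhi_fwd n hn m c e1 e2 hm hc hs1 hs2 ht1 ht2 hl1 hl2 hl3 he1 he2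
  · subst ht
    cases b
    · obtain ⟨tm, tc, ht1, ht2⟩ := htl
      show mcPhiF n m c ≤ mcPhiT n (m + e1) (c + e2) + 1
      exact mcPhi_bwd n hn m c e1 e2 hm hc hs1 hs2 ht1 ht2 hl1 hl2 hl3 he1 he2
    · exact absurd hb (by simp)

lemma mc_lb (n k : ℕ) (hn : 7 ≤ n) (s : Fin (k + 1) → MCState)
    (h : MCSolution n n 4 0 k s) : 2 * n - 3 ≤ k := by
  have key : ∀ i : ℕ, ∀ hi : i ≤ k,
      2 * n - 3 ≤ mcPhi n (s ⟨i, Nat.lt_succ_of_le hi⟩) + i := by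
    intro i
    induction i with
    | zero =>
      intro hi
      have h0 : (⟨0, Nat.lt_succ_of_le hi⟩ : Fin (k + 1)) = 0 := by
        ext; simp
      rw [h0, h.1]
      simp only [mcPhi, mcPhiT]
      split_ifs <;> omega
    | succ i ih =>
      intro hi
      have hik : i < k := hi
      have hmove := h.2.2 ⟨i, hik⟩
      have e1 : (⟨i, hik⟩ : Fin k).castSucc = (⟨i, Nat.lt_succ_of_le (Nat.le_of_lt hik)⟩ : Fin (k + 1)) := rfl
      have e2 : (⟨i, hik⟩ : Fin k).succ = (⟨i + 1, Nat.lt_succ_of_le hi⟩ : Fin (k + 1)) := rfl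
      rw [e1, e2] at hmove
      have hstep := mcPhi_move n hn hmove
      have hprev := ih (Nat.le_of_lt hik)
      omega
  have hlast := key k le_rfl
  have hk : (⟨k, Nat.lt_succ_of_le le_rfl⟩ : Fin (k + 1)) = Fin.last k := rfl
  rw [hk, h.2.1] at hlast
  simpa [mcPhi, mcPhiF] using hlast

/-- The explicit minimal solution. -/
def mcSol (n j : ℕ) : MCState :=
  if j % 2 = 0 then (n - j / 2, n - j / 2, true)
  else (n - (j / 2 + 2), n - (j / 2 + 2), false)

lemma legal_diag (n a : ℕ) (h : a ≤ n) (b : Bool) : MCLegal n n 0 (a, a, b) := by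
  refine ⟨h, h, ?_, ?_⟩ <;> dsimp only <;> intro _ <;> omega

lemma move_fwd22 (n a : ℕ) (h2 : 2 ≤ a) (han : a ≤ n) :
    MCMove n n 4 0 (a, a, true) (a - 2, a - 2, false) :=
  ⟨2, 2, legal_diag n a han true, legal_diag n (a - 2) (by omega) false,
    ⟨by omega, by omega, by omega⟩, Or.inl ⟨rfl, h2, h2, rfl⟩⟩

lemma move_bwd11 (n a : ℕ) (h : a + 1 ≤ n) :
    MCMove n n 4 0 (a, a, false) (a + 1, a + 1, true) :=
  ⟨1, 1, legal_diag n a (by omega) false, legal_diag n (a + 1) h true,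
    ⟨by omega, by omega, by omega⟩, Or.inr ⟨rfl, by dsimp only; omega, by dsimp only; omega, rfl⟩⟩

lemma mc_sol (n : ℕ) (hn : 7 ≤ n) :
    MCSolution n n 4 0 (2 * n - 3) (fun j => mcSol n j.val) := by
  refine ⟨?_, ?_, ?_⟩
  · have h0 : ((0 : Fin (2 * n - 3 + 1)) : ℕ) = 0 := rfl
    simp only [h0, mcSol]
    norm_num
  · have hl : ((Fin.last (2 * n - 3)) : ℕ) = 2 * n - 3 := rfl
    simp only [hl, mcSol]
    rw [if_neg (by omega)]
    have h1 : n - ((2 * n - 3) / 2 + 2) = 0 := by omega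
    rw [h1]
  · intro i
    have hv : (i : ℕ) < 2 * n - 3 := i.isLt
    have hcs : ((i.castSucc : Fin (2 * n - 3 + 1)) : ℕ) = (i : ℕ) := rfl
    have hsc : ((i.succ : Fin (2 * n - 3 + 1)) : ℕ) = (i : ℕ) + 1 := rfl
    simp only [hcs, hsc]
    rcases Nat.mod_two_eq_zero_or_one (i : ℕ) with he | ho
    · have h0 : mcSol n (i : ℕ) = (n - (i : ℕ) / 2, n - (i : ℕ) / 2, true) := by
        simp only [mcSol]; rw [if_pos he]
      have h1 : mcSol n ((i : ℕ) + 1)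
          = (n - (i : ℕ) / 2 - 2, n - (i : ℕ) / 2 - 2, false) := by
        simp only [mcSol]; rw [if_neg (by omega)]
        have : n - (((i : ℕ) + 1) / 2 + 2) = n - (i : ℕ) / 2 - 2 := by omega
        rw [this]
      rw [h0, h1]
      exact move_fwd22 n (n - (i : ℕ) / 2) (by omega) (by omega)
    · have h0 : mcSol n (i : ℕ) = (n - ((i : ℕ) / 2 + 2), n - ((i : ℕ) / 2 + 2), false) := by
        simp only [mcSol]; rw [if_neg (by omega)]
      have h1 : mcSol n ((i : ℕ) + 1)
          = (n - ((i : ℕ) / 2 + 2) + 1, n - ((i : ℕ) / 2 + 2) + 1, true) := by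
        simp only [mcSol]; rw [if_pos (by omega)]
        have : n - (((i : ℕ) + 1) / 2) = n - ((i : ℕ) / 2 + 2) + 1 := by omega
        rw [this]
      rw [h0, h1]
      exact move_bwd11 n (n - ((i : ℕ) / 2 + 2)) (by omega)

/-- For n ≥ 7, the minimal length of a solution of the puzzle (n,n,4,0) is 2n - 3. -/
theorem stmt6 (n : ℕ) (hn : 7 ≤ n) : MCMinLength n n 4 0 = 2 * n - 3 := by
  have hmem : 2 * n - 3 ∈ {k | ∃ s : Fin (k + 1) → MCState, MCSolution n n 4 0 k s} :=
    ⟨fun j => mcSol n j.val, mc_sol n hn⟩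
  refine le_antisymm (Nat.sInf_le hmem) (le_csInf ⟨_, hmem⟩ ?_)
  rintro b ⟨s, hs⟩
  exact mc_lb n b hn s hs
end

section
/- (Split Cannibals Strategy.) If C ≥ 1, M ≥ C + 2d + 1, and B > ⌈C/2⌉ + d + 1, then the puzzle (M, C, B, d) is solvable. -/
lemma mc_legal_mk {M C d : ℕ} (m c : ℕ) (b : Bool) (h1 : m ≤ M) (h2 : c ≤ C)
    (h3 : 0 < m → 0 < c → c + d ≤ m)
    (h4 : 0 < M - m → 0 < C - c → C - c + d ≤ M - m) :
    MCLegal M C d (m, c, b) :=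
  ⟨h1, h2, fun h => h3 h.1 h.2, fun h => h4 h.1 h.2⟩

lemma mc_moveF {M C B d : ℕ} (e1 e2 m c m' c' : ℕ) (hm : m = m' + e1) (hc : c = c' + e2)
    (hs : MCLegal M C d (m, c, true)) (ht : MCLegal M C d (m', c', false))
    (h1 : 1 ≤ e1 + e2) (h2 : e1 + e2 ≤ B) (h3 : 0 < e1 → 0 < e2 → e2 + d ≤ e1) :
    MCMove M C B d (m, c, true) (m', c', false) :=
  ⟨e1, e2, hs, ht, ⟨h1, h2, fun h => h3 h.1 h.2⟩,
    Or.inl ⟨rfl, by show e1 ≤ m; omega, by show e2 ≤ c; omega,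
      by subst hm; subst hc; simp⟩⟩

lemma mc_moveB {M C B d : ℕ} (e1 e2 m c m' c' : ℕ) (hm : m' = m + e1) (hc : c' = c + e2)
    (hs : MCLegal M C d (m, c, false)) (ht : MCLegal M C d (m', c', true))
    (h1 : 1 ≤ e1 + e2) (h2 : e1 + e2 ≤ B) (h3 : 0 < e1 → 0 < e2 → e2 + d ≤ e1) :
    MCMove M C B d (m, c, false) (m', c', true) := by
  have hm' : m' ≤ M := ht.1
  have hc' : c' ≤ C := ht.2.1
  exact ⟨e1, e2, hs, ht, ⟨h1, h2, fun h => h3 h.1 h.2⟩,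
    Or.inr ⟨rfl, by show m + e1 ≤ M; omega, by show c + e2 ≤ C; omega, by rw [hm, hc]⟩⟩

lemma mc_exists_seq {α : Type*} {R : α → α → Prop} {s t : α}
    (h : Relation.ReflTransGen R s t) :
    ∃ k, ∃ f : Fin (k + 1) → α, f 0 = s ∧ f (Fin.last k) = t ∧
      ∀ i : Fin k, R (f i.castSucc) (f i.succ) := by
  induction h using Relation.ReflTransGen.head_induction_on with
  | refl => exact ⟨0, fun _ => t, rfl, rfl, fun i => i.elim0⟩
  | @head a c hR _ ih =>
    obtain ⟨k, f, h0, hl, hmv⟩ := ih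
    refine ⟨k + 1, Fin.cons a f, by simp, ?_, ?_⟩
    · rw [← Fin.succ_last, Fin.cons_succ]; exact hl
    · intro i
      induction i using Fin.cases with
      | zero =>
        simpa [Fin.castSucc_zero, Fin.cons_succ, Fin.cons_zero, h0] using hR
      | succ j =>
        rw [← Fin.succ_castSucc, Fin.cons_succ, Fin.cons_succ]
        exact hmv j

lemma mc_solvable_of_reach (M C B d : ℕ)
    (h : Relation.ReflTransGen (MCMove M C B d) (M, C, true) (0, 0, false)) :
    MCSolvable M C B d := by
  obtain ⟨k, f, h0, hl, hmv⟩ := mc_exists_seq h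
  exact ⟨k, f, h0, hl, hmv⟩

lemma mc_shuttleM (M C B d a b : ℕ) (hab : a + b = C) (ha : 1 ≤ a) (hba : b ≤ a)
    (hB : a + d + 2 ≤ B) (hM : C + 2 * d + 1 ≤ M) (m : ℕ) :
    b + 1 + d ≤ m → m + a + d ≤ M →
    Relation.ReflTransGen (MCMove M C B d) (m, b + 1, false) (0, b + 1, false) := by
  induction m using Nat.strong_induction_on with
  | _ m ih =>
    intro h1 h2
    have hs : MCLegal M C d (m, b + 1, false) :=
      mc_legal_mk _ _ _ (by omega) (by omega) (by omega) (by omega)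
    have hmid : MCLegal M C d (m + 1, b + 1, true) :=
      mc_legal_mk _ _ _ (by omega) (by omega) (by omega) (by omega)
    have mv1 : MCMove M C B d (m, b + 1, false) (m + 1, b + 1, true) :=
      mc_moveB 1 0 m (b + 1) (m + 1) (b + 1) (by omega) (by omega) hs hmid
        (by omega) (by omega) (by omega)
    by_cases hcase : m + 1 ≤ B
    · have ht : MCLegal M C d (0, b + 1, false) :=
        mc_legal_mk _ _ _ (by omega) (by omega) (by omega) (by omega)
      have mv2 : MCMove M C B d (m + 1, b + 1, true) (0, b + 1, false) :=
        mc_moveF (m + 1) 0 (m + 1) (b + 1) 0 (b + 1) (by omega) (by omega) hmid ht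
          (by omega) (by omega) (by omega)
      exact .head mv1 (.head mv2 .refl)
    · set e1 := min B (m - b - d) with he1
      have he12 : 2 ≤ e1 := by omega
      have he1B : e1 ≤ B := by omega
      have hm' : b + 1 + d ≤ m + 1 - e1 := by omega
      have ht : MCLegal M C d (m + 1 - e1, b + 1, false) :=
        mc_legal_mk _ _ _ (by omega) (by omega) (by omega) (by omega)
      have mv2 : MCMove M C B d (m + 1, b + 1, true) (m + 1 - e1, b + 1, false) :=
        mc_moveF e1 0 (m + 1) (b + 1) (m + 1 - e1) (b + 1) (by omega) (by omega) hmid ht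
          (by omega) (by omega) (by omega)
      exact .head mv1 (.head mv2 (ih (m + 1 - e1) (by omega) (by omega) (by omega)))

lemma mc_shuttleC (M C B d : ℕ) (hM : C + d ≤ M) (hB : 2 ≤ B) (c : ℕ) :
    c + 1 ≤ C →
    Relation.ReflTransGen (MCMove M C B d) (0, c, false) (0, 0, false) := by
  induction c with
  | zero => intro _; exact .refl
  | succ c ih =>
    intro h
    have hs : MCLegal M C d (0, c + 1, false) :=
      mc_legal_mk _ _ _ (by omega) (by omega) (by omega) (by omega)
    have hmid : MCLegal M C d (0, c + 2, true) :=
      mc_legal_mk _ _ _ (by omega) (by omega) (by omega) (by omega)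
    have ht : MCLegal M C d (0, c, false) :=
      mc_legal_mk _ _ _ (by omega) (by omega) (by omega) (by omega)
    have mv1 : MCMove M C B d (0, c + 1, false) (0, c + 2, true) :=
      mc_moveB 0 1 0 (c + 1) 0 (c + 2) (by omega) (by omega) hs hmid
        (by omega) (by omega) (by omega)
    have mv2 : MCMove M C B d (0, c + 2, true) (0, c, false) :=
      mc_moveF 0 2 0 (c + 2) 0 c (by omega) (by omega) hmid ht
        (by omega) (by omega) (by omega)
    exact .head mv1 (.head mv2 (ih (by omega)))


/-- Split Cannibals Strategy: if C ≥ 1, M ≥ C + 2d + 1 and B > ⌈C/2⌉ + d + 1 then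
the puzzle is solvable. -/
theorem stmt13 (M C B d : ℕ) (hC : 1 ≤ C) (hM : M ≥ C + 2 * d + 1)
    (hB : B > (C + 1) / 2 + d + 1) : MCSolvable M C B d := by
  set a := (C + 1) / 2 with hadef
  set b := C - a with hbdef
  have hab : a + b = C := by omega
  have ha : 1 ≤ a := by omega
  have hba : b ≤ a := by omega
  have hB2 : a + d + 2 ≤ B := by omega
  apply mc_solvable_of_reach
  -- legality of the states along the fixed prefix
  have L0 : MCLegal M C d (M, C, true) :=
    mc_legal_mk _ _ _ (by omega) (by omega) (by omega) (by omega)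
  have L1 : MCLegal M C d (M, b, false) :=
    mc_legal_mk _ _ _ (by omega) (by omega) (by omega) (by omega)
  have L2 : MCLegal M C d (M, b + 1, true) :=
    mc_legal_mk _ _ _ (by omega) (by omega) (by omega) (by omega)
  have L3 : MCLegal M C d (M - a - d, b + 1, false) :=
    mc_legal_mk _ _ _ (by omega) (by omega) (by omega) (by omega)
  have mv1 : MCMove M C B d (M, C, true) (M, b, false) :=
    mc_moveF 0 a M C M b (by omega) (by omega) L0 L1 (by omega) (by omega) (by omega)
  have mv2 : MCMove M C B d (M, b, false) (M, b + 1, true) :=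
    mc_moveB 0 1 M b M (b + 1) (by omega) (by omega) L1 L2
      (by omega) (by omega) (by omega)
  have mv3 : MCMove M C B d (M, b + 1, true) (M - a - d, b + 1, false) :=
    mc_moveF (a + d) 0 M (b + 1) (M - a - d) (b + 1) (by omega) (by omega) L2 L3
      (by omega) (by omega) (by omega)
  have r4 : Relation.ReflTransGen (MCMove M C B d) (M - a - d, b + 1, false)
      (0, b + 1, false) :=
    mc_shuttleM M C B d a b hab ha hba hB2 hM (M - a - d) (by omega) (by omega)
  have r5 : Relation.ReflTransGen (MCMove M C B d) (0, b + 1, false) (0, 0, false) := by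
    by_cases hC3 : 3 ≤ C
    · exact mc_shuttleC M C B d (by omega) (by omega) (b + 1) (by omega)
    · -- C = 1 or C = 2, so a = 1 and b + 1 = C : all cannibals are at the first bank
      have hbC : b + 1 = C := by omega
      rw [hbC]
      have K0 : MCLegal M C d (0, C, false) :=
        mc_legal_mk _ _ _ (by omega) (by omega) (by omega) (by omega)
      have Kend : MCLegal M C d (0, 0, false) :=
        mc_legal_mk _ _ _ (by omega) (by omega) (by omega) (by omega)
      have K1 : MCLegal M C d (d + 1, 1, true) :=
        mc_legal_mk _ _ _ (by omega) (by omega) (by omega) (by omega)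
      have mvA : MCMove M C B d (d + 1, 1, true) (0, 0, false) :=
        mc_moveF (d + 1) 1 (d + 1) 1 0 0 (by omega) (by omega) K1 Kend
          (by omega) (by omega) (by omega)
      have r1 : Relation.ReflTransGen (MCMove M C B d) (0, 1, false) (0, 0, false) := by
        have K01 : MCLegal M C d (0, 1, false) :=
          mc_legal_mk _ _ _ (by omega) (by omega) (by omega) (by omega)
        have mvb : MCMove M C B d (0, 1, false) (d + 1, 1, true) :=
          mc_moveB (d + 1) 0 0 1 (d + 1) 1 (by omega) (by omega) K01 K1
            (by omega) (by omega) (by omega)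
        exact .head mvb (.head mvA .refl)
      interval_cases C
      · exact r1
      · -- C = 2
        have K2 : MCLegal M 2 d (d + 2, 2, true) :=
          mc_legal_mk _ _ _ (by omega) (by omega) (by omega) (by omega)
        have K3 : MCLegal M 2 d (0, 1, false) :=
          mc_legal_mk _ _ _ (by omega) (by omega) (by omega) (by omega)
        have mvb : MCMove M 2 B d (0, 2, false) (d + 2, 2, true) :=
          mc_moveB (d + 2) 0 0 2 (d + 2) 2 (by omega) (by omega) K0 K2
            (by omega) (by omega) (by omega)
        have mvc : MCMove M 2 B d (d + 2, 2, true) (0, 1, false) :=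
          mc_moveF (d + 2) 1 (d + 2) 2 0 1 (by omega) (by omega) K2 K3
            (by omega) (by omega) (by omega)
        exact .head mvb (.head mvc r1)
  exact .head mv1 (.head mv2 (.head mv3 (r4.trans r5)))
end
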